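/- Every anonymous hedonic game satisfying the equal-preference condition (all agents have the same strict ranking of coalition sizes) has a nonempty core: the partition constructed by repeatedly forming a coalition of the commonly most-preferred feasible size among the remaining agents is core stable. -/

import Mathlib

/-!
The first coalition `T` of a greedy chain has the most preferred of all feasible sizes. A
coalition `S` meeting `T` therefore cannot block: its members in `T` would need `|S|` ranked
above `|T|`, while `|T|` is ranked above every other feasible size. So a blocking coalition
avoids `T` and lies among the remaining agents, where the same argument applies to the next
coalition of the chain. A greedy chain exists because a transitive relation that is total
on a finite nonempty set of sizes has a top element there.
-/

open Finset

variable {α : Type*}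

/-- `GreedySizeChain gt L rem`: the list `L` of coalitions is obtained by
repeatedly forming a coalition of the commonly most `gt`-preferred feasible size
among the remaining agents `rem`, until no agent remains. -/
def GreedySizeChain [DecidableEq α] (gt : ℕ → ℕ → Prop) :
    List (Finset α) → Finset α → Prop
  | [], rem => rem = ∅
  | T :: L, rem => T ⊆ rem ∧ T.Nonempty ∧
      (∀ s : ℕ, 1 ≤ s → s ≤ rem.card → s ≠ T.card → gt T.card s) ∧
      GreedySizeChain gt L (rem \ T)

/-- Core stability for an anonymous hedonic game with common strict size
ranking `gt`. -/
def CoreStableAnon (gt : ℕ → ℕ → Prop) (π : Finset (Finset α)) : Prop :=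
  ¬ ∃ S : Finset α, S.Nonempty ∧ ∀ i ∈ S, ∀ T ∈ π, i ∈ T → gt S.card T.card

theorem Finset.exists_forall_ne_rel_of_transitive {β : Type*} {r : β → β → Prop}
    (htrans : Transitive r) {F : Finset β} (hF : F.Nonempty)
    (htot : ∀ s ∈ F, ∀ t ∈ F, s ≠ t → r s t ∨ r t s) :
    ∃ s ∈ F, ∀ t ∈ F, t ≠ s → r s t := by
  induction hF using Finset.Nonempty.cons_induction with
  | singleton a => exact ⟨a, mem_singleton_self a, fun t ht hta => absurd (mem_singleton.1 ht) hta⟩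
  | cons a F haF hF ih =>
    have htotF : ∀ s ∈ F, ∀ t ∈ F, s ≠ t → r s t ∨ r t s := fun s hs t ht =>
      htot s (mem_cons_of_mem hs) t (mem_cons_of_mem ht)
    obtain ⟨b, hbF, hb⟩ := ih htotF
    have hab : a ≠ b := ne_of_mem_of_not_mem hbF haF |>.symm
    rcases htot a (mem_cons_self a F) b (mem_cons_of_mem hbF) hab with hab' | hba
    · refine ⟨a, mem_cons_self a F, fun t ht hta => ?_⟩
      obtain rfl | htF := mem_cons.1 ht
      · exact absurd rfl hta
      obtain rfl | htb := eq_or_ne t b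
      · exact hab'
      · exact htrans hab' (hb t htF htb)
    · refine ⟨b, mem_cons_of_mem hbF, fun t ht htb => ?_⟩
      obtain rfl | htF := mem_cons.1 ht
      · exact hba
      · exact hb t htF htb

theorem exists_greedySizeChain [DecidableEq α] {gt : ℕ → ℕ → Prop} (htrans : Transitive gt)
    {n : ℕ} (htot : ∀ s t : ℕ, 1 ≤ s → s ≤ n → 1 ≤ t → t ≤ n → s ≠ t → gt s t ∨ gt t s)
    (rem : Finset α) (hrem : rem.card ≤ n) : ∃ L, GreedySizeChain gt L rem := by
  induction rem using Finset.strongInduction with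
  | H rem ih =>
  obtain rfl | hne := rem.eq_empty_or_nonempty
  · exact ⟨[], rfl⟩
  have hsizes : (Icc 1 rem.card).Nonempty := ⟨1, mem_Icc.2 ⟨le_rfl, card_pos.2 hne⟩⟩
  obtain ⟨k, hk, hbest⟩ := exists_forall_ne_rel_of_transitive htrans hsizes
    fun s hs t ht => by
      rw [mem_Icc] at hs ht
      exact htot s t hs.1 (hs.2.trans hrem) ht.1 (ht.2.trans hrem)
  rw [mem_Icc] at hk
  obtain ⟨T, hTrem, rfl⟩ := exists_subset_card_eq hk.2
  have hT : T.Nonempty := card_pos.1 hk.1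
  have hsub : rem \ T ⊂ rem := sdiff_ssubset hTrem hT
  obtain ⟨L, hL⟩ := ih (rem \ T) hsub ((card_le_card hsub.subset).trans hrem)
  exact ⟨T :: L, hTrem, hT, fun s hs1 hs2 hsT => hbest s (mem_Icc.2 ⟨hs1, hs2⟩) hsT, hL⟩

namespace GreedySizeChain

variable [DecidableEq α] {gt : ℕ → ℕ → Prop}

theorem subset_of_mem {L : List (Finset α)} {rem T : Finset α} (h : GreedySizeChain gt L rem)
    (hT : T ∈ L) : T ⊆ rem := by
  induction L generalizing rem with
  | nil => exact absurd hT List.not_mem_nil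
  | cons T₀ L ih =>
    obtain rfl | hT := List.mem_cons.1 hT
    · exact h.1
    · exact (ih h.2.2.2 hT).trans sdiff_subset

theorem nonempty_of_mem {L : List (Finset α)} {rem T : Finset α} (h : GreedySizeChain gt L rem)
    (hT : T ∈ L) : T.Nonempty := by
  induction L generalizing rem with
  | nil => exact absurd hT List.not_mem_nil
  | cons T₀ L ih =>
    obtain rfl | hT := List.mem_cons.1 hT
    · exact h.2.1
    · exact ih h.2.2.2 hT

theorem existsUnique_mem {L : List (Finset α)} {rem : Finset α} (h : GreedySizeChain gt L rem)
    {a : α} (ha : a ∈ rem) : ∃! T, T ∈ L ∧ a ∈ T := by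
  induction L generalizing rem with
  | nil => exact absurd ha (by rw [show rem = ∅ from h]; exact notMem_empty a)
  | cons T₀ L ih =>
    obtain ⟨-, -, -, htail⟩ := h
    by_cases haT₀ : a ∈ T₀
    · refine ⟨T₀, ⟨List.mem_cons_self, haT₀⟩, fun T ⟨hT, haT⟩ => ?_⟩
      obtain rfl | hT := List.mem_cons.1 hT
      · rfl
      · exact absurd haT₀ (mem_sdiff.1 (htail.subset_of_mem hT haT)).2
    · obtain ⟨T, ⟨hT, haT⟩, huniq⟩ := ih htail (mem_sdiff.2 ⟨ha, haT₀⟩)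
      refine ⟨T, ⟨List.mem_cons_of_mem T₀ hT, haT⟩, fun T' ⟨hT', haT'⟩ => ?_⟩
      obtain rfl | hT' := List.mem_cons.1 hT'
      · exact absurd haT' haT₀
      · exact huniq T' ⟨hT', haT'⟩

theorem exists_not_gt {L : List (Finset α)} {rem S : Finset α} (h : GreedySizeChain gt L rem)
    (hirr : ∀ s, ¬ gt s s) (htrans : Transitive gt) (hS : S.Nonempty) (hSrem : S ⊆ rem) :
    ∃ i ∈ S, ∃ T ∈ L, i ∈ T ∧ ¬ gt S.card T.card := by
  induction L generalizing rem with
  | nil =>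
    obtain rfl : rem = ∅ := h
    exact absurd (subset_empty.1 hSrem) hS.ne_empty
  | cons T₀ L ih =>
    obtain ⟨-, -, hbest, htail⟩ := h
    by_cases hmeet : ∃ i ∈ S, i ∈ T₀
    · obtain ⟨i, hiS, hiT₀⟩ := hmeet
      refine ⟨i, hiS, T₀, List.mem_cons_self, hiT₀, fun hgt => ?_⟩
      obtain hST | hST := eq_or_ne S.card T₀.card
      · exact hirr _ (hST ▸ hgt)
      · exact hirr _ (htrans hgt (hbest S.card (card_pos.2 hS) (card_le_card hSrem) hST))
    · have hSrest : S ⊆ rem \ T₀ := fun i hi =>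
        mem_sdiff.2 ⟨hSrem hi, fun hiT₀ => hmeet ⟨i, hi, hiT₀⟩⟩
      obtain ⟨i, hiS, T, hT, hiT, hnot⟩ := ih htail hSrest
      exact ⟨i, hiS, T, List.mem_cons_of_mem T₀ hT, hiT, hnot⟩

theorem coreStableAnon [Fintype α] {L : List (Finset α)} (h : GreedySizeChain gt L univ)
    (hirr : ∀ s, ¬ gt s s) (htrans : Transitive gt) : CoreStableAnon gt L.toFinset := by
  rintro ⟨S, hS, hblock⟩
  obtain ⟨i, hiS, T, hT, hiT, hnot⟩ := h.exists_not_gt hirr htrans hS (subset_univ S)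
  exact hnot (hblock i hiS T (List.mem_toFinset.2 hT) hiT)

end GreedySizeChain

/-- Every anonymous hedonic game in which all agents share the same
strict ranking `gt` of coalition sizes has a nonempty core: the partition built by
repeatedly forming a coalition of the commonly most-preferred feasible size among
the remaining agents is core stable. -/
theorem stmt10 {α : Type*} [Fintype α] [DecidableEq α]
    (gt : ℕ → ℕ → Prop)
    (hirr : ∀ s, ¬ gt s s)
    (htrans : Transitive gt)
    (htotal : ∀ s t : ℕ, 1 ≤ s → s ≤ Fintype.card α → 1 ≤ t → t ≤ Fintype.card α →
      s ≠ t → gt s t ∨ gt t s) :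
    (∃ π : Finset (Finset α),
      ((∀ S ∈ π, S.Nonempty) ∧ ∀ a : α, ∃! S, S ∈ π ∧ a ∈ S) ∧ CoreStableAnon gt π) ∧
    ∀ L : List (Finset α), GreedySizeChain gt L Finset.univ →
      CoreStableAnon gt L.toFinset := by
  obtain ⟨L, hL⟩ := exists_greedySizeChain htrans htotal univ (card_le_univ univ)
  have hpartition : (∀ T ∈ L.toFinset, T.Nonempty) ∧ ∀ a : α, ∃! T, T ∈ L.toFinset ∧ a ∈ T := by
    simp only [List.mem_toFinset]
    exact ⟨fun T hT => hL.nonempty_of_mem hT, fun a => hL.existsUnique_mem (mem_univ a)⟩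
  exact ⟨⟨L.toFinset, hpartition, hL.coreStableAnon hirr htrans⟩,
    fun L' hL' => hL'.coreStableAnon hirr htrans⟩
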